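/- Decomposable model parameter formula: for a discrete graphical model Markov with respect to a decomposable graph G with cliques C and separators S, the joint probabilities factor as p(i) = (∏_{C} p^C(i_C)) / (∏_{S} p^S(i_S)), and consequently each log-linear parameter satisfies θ_j = Σ_{C ∈ 𝒞^j} θ^C_j − Σ_{S ∈ 𝒮^j} θ^S_j, where 𝒞^j (resp. 𝒮^j) is the set of cliques (resp. separators, counted with multiplicity) containing S(j), and θ^C_j, θ^S_j are the log-linear parameters of the marginal distributions on C and S. -/

import Mathlib

/-!
Write `H t` for the union of the first `t` cliques. Marginalizing a clique-factorized function
onto `H t` keeps a clique factorization: the factor of the last clique, once summed out, only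
depends on its separator, which the running intersection property places inside an earlier
clique. Hence the `H (t+1)`-marginal is an `H t`-local function times a `C t`-local one, which
makes `H t` and `C t` conditionally independent given the separator,
`p^{H t} p^{C t} = p^{H (t+1)} p^{S t}`, and these identities telescope to the product formula.
Taking logarithms, the Möbius inversion defining the loglinear parameters is linear, and a
marginal parameter `θ^A_j` vanishes unless `S(j) ⊆ A`.
-/

attribute [local instance] Classical.propDecidable

/-- The support of a cell. -/
noncomputable def supp {V : Type*} [Fintype V] {I : V → Type*}
    (z : ∀ v, I v) (i : ∀ v, I v) : Finset V :=
  Finset.univ.filter (fun v => i v ≠ z v)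

/-- `tri z j i` is the relation `j ◁ i`. -/
def tri {V : Type*} {I : V → Type*} (z : ∀ v, I v) (j i : ∀ v, I v) : Prop :=
  ∀ v, j v ≠ z v → j v = i v

/-- The `A`-marginal probability `p^A(i_A)` of a cell `i`. -/
noncomputable def pA {V : Type*} [Fintype V]
    {I : V → Type*} [∀ v, Fintype (I v)]
    (p : (∀ v, I v) → ℝ) (A : Finset V) (m : ∀ v, I v) : ℝ :=
  ∑ i ∈ Finset.univ.filter (fun i => ∀ v ∈ A, i v = m v), p i

/-- The loglinear parameter `θ^A_j` of the `A`-marginal distribution, defined by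
Möbius inversion; for `A = V` this is the joint loglinear parameter `θ_j`. -/
noncomputable def θA {V : Type*} [Fintype V] [DecidableEq V]
    {I : V → Type*} [∀ v, Fintype (I v)] [∀ v, DecidableEq (I v)]
    (z : ∀ v, I v) (p : (∀ v, I v) → ℝ) (A : Finset V) (j : ∀ v, I v) : ℝ :=
  ∑ j' ∈ Finset.univ.filter (fun j' => tri z j' j),
    (-1 : ℝ) ^ ((supp z j).card - (supp z j').card) * Real.log (pA p A j' / pA p A z)

open Finset

section Marginal

variable {V : Type*} {I : V → Type*}

def IsLocal (A : Finset V) (f : (∀ v, I v) → ℝ) : Prop :=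
  ∀ ⦃x y : ∀ v, I v⦄, (∀ v ∈ A, x v = y v) → f x = f y

namespace IsLocal

variable {A B : Finset V} {f g : (∀ v, I v) → ℝ}

lemma mono (hf : IsLocal A f) (hAB : A ⊆ B) : IsLocal B f :=
  fun _ _ h => hf fun v hv => h v (hAB hv)

lemma mul (hf : IsLocal A f) (hg : IsLocal A g) : IsLocal A (fun y => f y * g y) :=
  fun _ _ h => congrArg₂ (· * ·) (hf h) (hg h)

lemma div (hf : IsLocal A f) (hg : IsLocal A g) : IsLocal A (fun y => f y / g y) :=
  fun _ _ h => congrArg₂ (· / ·) (hf h) (hg h)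

lemma prod {ι : Type*} {s : Finset ι} {ψ : ι → (∀ v, I v) → ℝ}
    (hψ : ∀ m ∈ s, IsLocal A (ψ m)) : IsLocal A (fun y => ∏ m ∈ s, ψ m y) :=
  fun _ _ h => prod_congr rfl fun m hm => hψ m hm h

end IsLocal

variable [Fintype V] [∀ v, Fintype (I v)]

noncomputable def cylinder (A : Finset V) (m : ∀ v, I v) : Finset (∀ v, I v) :=
  univ.filter fun i => ∀ v ∈ A, i v = m v

lemma mem_cylinder {A : Finset V} {m x : ∀ v, I v} : x ∈ cylinder A m ↔ ∀ v ∈ A, x v = m v := by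
  simp [cylinder]

lemma pA_eq_sum_cylinder (p : (∀ v, I v) → ℝ) (A : Finset V) (m : ∀ v, I v) :
    pA p A m = ∑ i ∈ cylinder A m, p i := rfl

lemma self_mem_cylinder (A : Finset V) (m : ∀ v, I v) : m ∈ cylinder A m :=
  mem_cylinder.2 fun _ _ => rfl

lemma card_cylinder_pos (A : Finset V) (m : ∀ v, I v) : 0 < ((cylinder A m).card : ℝ) := by
  exact_mod_cast card_pos.2 ⟨m, self_mem_cylinder A m⟩

lemma cylinder_univ (m : ∀ v, I v) : cylinder univ m = {m} := by
  ext x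
  simp [mem_cylinder, funext_iff]

lemma pA_univ (p : (∀ v, I v) → ℝ) : pA p univ = p :=
  funext fun m => by rw [pA_eq_sum_cylinder, cylinder_univ, sum_singleton]

lemma pA_pos {p : (∀ v, I v) → ℝ} (hp : ∀ i, 0 < p i) (A : Finset V) (m : ∀ v, I v) :
    0 < pA p A m :=
  sum_pos (fun i _ => hp i) ⟨m, self_mem_cylinder A m⟩

lemma pA_mul_of_isLocal {F : (∀ v, I v) → ℝ} {A : Finset V} (hF : IsLocal A F)
    (g : (∀ v, I v) → ℝ) (m : ∀ v, I v) :
    pA (fun y => F y * g y) A m = F m * pA g A m := by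
  rw [pA_eq_sum_cylinder, pA_eq_sum_cylinder, mul_sum]
  exact sum_congr rfl fun x hx => by rw [hF (mem_cylinder.1 hx)]

lemma pA_mul_of_isLocal_right {g : (∀ v, I v) → ℝ} {A : Finset V} (hg : IsLocal A g)
    (F : (∀ v, I v) → ℝ) (m : ∀ v, I v) :
    pA (fun y => F y * g y) A m = pA F A m * g m := by
  simp only [mul_comm (F _), pA_mul_of_isLocal hg, mul_comm (g m)]

variable [DecidableEq V]

lemma IsLocal.pA_inter {B : Finset V} {g : (∀ v, I v) → ℝ} (hg : IsLocal B g) (A : Finset V) :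
    IsLocal (A ∩ B) (pA g A) := by
  intro m m' h
  rw [pA_eq_sum_cylinder, pA_eq_sum_cylinder]
  refine sum_nbij' (fun x => A.piecewise m' x) (fun x => A.piecewise m x) ?_ ?_ ?_ ?_ ?_ <;>
    intro x hx <;> simp only [mem_cylinder] at hx ⊢
  · intro v hv; simp [hv]
  · intro v hv; simp [hv]
  · ext v; by_cases hv : v ∈ A <;> simp [hv, hx v]
  · ext v; by_cases hv : v ∈ A <;> simp [hv, hx v]
  · refine hg fun v hvB => ?_
    by_cases hv : v ∈ A
    · simp [hv, hx v hv, h v (mem_inter.2 ⟨hv, hvB⟩)]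
    · simp [hv]

lemma isLocal_pA (p : (∀ v, I v) → ℝ) (A : Finset V) : IsLocal A (pA p A) := by
  simpa using (IsLocal.pA_inter (B := univ)
    (fun _ _ h => congrArg p (funext fun v => h v (mem_univ v))) A)

lemma card_cylinder_congr (A : Finset V) (m m' : ∀ v, I v) :
    ((cylinder A m).card : ℝ) = (cylinder A m').card := by
  simpa [pA_eq_sum_cylinder] using
    IsLocal.pA_inter (B := ∅) (g := fun _ => (1 : ℝ)) (fun _ _ _ => rfl) A (by simp)

lemma isLocal_card_cylinder (A B : Finset V) :
    IsLocal A (fun m : ∀ v, I v => ((cylinder B m).card : ℝ)) :=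
  fun m m' _ => card_cylinder_congr B m m'

lemma filter_mem_cylinder_eq {A B : Finset V} {i x : ∀ v, I v} (hx : x ∈ cylinder (A ∩ B) i) :
    (cylinder A i).filter (fun y => x ∈ cylinder B y) = cylinder (A ∪ B) (A.piecewise i x) := by
  ext y
  simp only [mem_filter, mem_cylinder, mem_union] at hx ⊢
  constructor
  · rintro ⟨hyA, hyB⟩ v (hv | hv)
    · simp [hv, hyA v hv]
    · by_cases hvA : v ∈ A
      · simp [hvA, hyA v hvA]
      · simp [hvA, hyB v hv]
  · intro hy
    refine ⟨fun v hv => by simpa [hv] using hy v (.inl hv), fun v hv => ?_⟩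
    by_cases hvA : v ∈ A
    · rw [hy v (.inl hvA), hx v (mem_inter.2 ⟨hvA, hv⟩)]
      simp [hvA]
    · simpa [hvA] using (hy v (.inr hv)).symm

lemma filter_mem_cylinder_eq_empty {A B : Finset V} {i x : ∀ v, I v}
    (hx : x ∉ cylinder (A ∩ B) i) :
    (cylinder A i).filter (fun y => x ∈ cylinder B y) = ∅ := by
  simp only [mem_cylinder, mem_inter, not_forall] at hx
  obtain ⟨v, ⟨hvA, hvB⟩, hv⟩ := hx
  refine filter_eq_empty_iff.2 fun y hy hxy => hv ?_
  rw [mem_cylinder.1 hxy v hvB, mem_cylinder.1 hy v hvA]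

/-- Double counting: `x` is counted once for each `y` agreeing with `i` on `A` and with `x` on
`B`; there are `|cylinder (A ∪ B) i|` such `y` if `x` agrees with `i` on `A ∩ B`, none otherwise. -/
lemma pA_pA (q : (∀ v, I v) → ℝ) (A B : Finset V) (i : ∀ v, I v) :
    pA (pA q B) A i = (cylinder (A ∪ B) i).card * pA q (A ∩ B) i := by
  have hcount : ∀ x, (((cylinder A i).filter (fun y => x ∈ cylinder B y)).card : ℝ) =
      if x ∈ cylinder (A ∩ B) i then ((cylinder (A ∪ B) i).card : ℝ) else 0 := by
    intro x
    split_ifs with hx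
    · rw [filter_mem_cylinder_eq hx, card_cylinder_congr]
    · rw [filter_mem_cylinder_eq_empty hx, card_empty, Nat.cast_zero]
  calc pA (pA q B) A i
      = ∑ y ∈ cylinder A i, ∑ x, if x ∈ cylinder B y then q x else 0 := by
        simp only [pA_eq_sum_cylinder, sum_ite_mem, univ_inter]
    _ = ∑ x, (((cylinder A i).filter (fun y => x ∈ cylinder B y)).card : ℝ) * q x := by
        rw [sum_comm]
        refine sum_congr rfl fun x _ => ?_
        rw [← sum_filter, sum_const, nsmul_eq_mul]
    _ = ∑ x, if x ∈ cylinder (A ∩ B) i then (cylinder (A ∪ B) i).card * q x else 0 := by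
        simp only [hcount, ite_mul, zero_mul]
    _ = (cylinder (A ∪ B) i).card * pA q (A ∩ B) i := by
        rw [sum_ite_mem, univ_inter, pA_eq_sum_cylinder, mul_sum]

lemma pA_pA_of_subset (q : (∀ v, I v) → ℝ) {A B : Finset V} (hAB : A ⊆ B) (i : ∀ v, I v) :
    pA (pA q B) A i = (cylinder B i).card * pA q A i := by
  rw [pA_pA, union_eq_right.2 hAB, inter_eq_left.2 hAB]

/-- Conditional independence of `A` and `B` given `A ∩ B`. -/
lemma pA_mul_pA_eq_of_isLocal (p : (∀ v, I v) → ℝ) {A B : Finset V} {F g : (∀ v, I v) → ℝ}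
    (hF : IsLocal A F) (hg : IsLocal B g) (hq : ∀ y, pA p (A ∪ B) y = F y * g y)
    (i : ∀ v, I v) :
    pA p A i * pA p B i = pA p (A ∪ B) i * pA p (A ∩ B) i := by
  set c : ℝ := ((cylinder (A ∪ B) i).card : ℝ)
  have hq' : pA p (A ∪ B) = fun y => F y * g y := funext hq
  have hA : c * pA p A i = F i * pA g A i := by
    rw [← pA_pA_of_subset p subset_union_left, hq', pA_mul_of_isLocal hF]
  have hB : c * pA p B i = pA F B i * g i := by
    rw [← pA_pA_of_subset p subset_union_right, hq', pA_mul_of_isLocal_right hg]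
  have hAB : c * (c * pA p (A ∩ B) i) = pA F B i * pA g A i := by
    have hFB : IsLocal A (pA F B) := (hF.pA_inter B).mono inter_subset_right
    rw [← pA_pA_of_subset p (inter_subset_left.trans subset_union_left), hq', ← pA_pA,
      funext (pA_mul_of_isLocal_right hg F), pA_mul_of_isLocal hFB]
  have hc : c * c ≠ 0 := (mul_pos (card_cylinder_pos _ _) (card_cylinder_pos _ _)).ne'
  refine mul_left_cancel₀ hc ?_
  calc c * c * (pA p A i * pA p B i) = (c * pA p A i) * (c * pA p B i) := by ring
    _ = (F i * g i) * (c * (c * pA p (A ∩ B) i)) := by rw [hA, hB, hAB]; ring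
    _ = c * c * (pA p (A ∪ B) i * pA p (A ∩ B) i) := by rw [hq]; ring

end Marginal

section Factorization

variable {V : Type*} {I : V → Type*} {ι : Type*}

def FactorsOver (C : ι → Finset V) (s : Finset ι) (f : (∀ v, I v) → ℝ) : Prop :=
  ∃ ψ : ι → (∀ v, I v) → ℝ, (∀ m ∈ s, IsLocal (C m) (ψ m)) ∧ ∀ y, f y = ∏ m ∈ s, ψ m y

namespace FactorsOver

variable {C : ι → Finset V} {s : Finset ι} {f : (∀ v, I v) → ℝ}

lemma isLocal [DecidableEq V] (hf : FactorsOver C s f) : IsLocal (s.biUnion C) f := by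
  obtain ⟨ψ, hψ, hf⟩ := hf
  intro x y h
  rw [hf, hf]
  exact IsLocal.prod (fun m hm => (hψ m hm).mono (subset_biUnion_of_mem C hm)) h

variable [DecidableEq ι]

lemma mul_isLocal (hf : FactorsOver C s f) {σ : ι} (hσ : σ ∈ s) {g : (∀ v, I v) → ℝ}
    (hg : IsLocal (C σ) g) : FactorsOver C s (fun y => f y * g y) := by
  obtain ⟨ψ, hψ, hf⟩ := hf
  refine ⟨fun m y => ψ m y * if m = σ then g y else 1, fun m hm => ?_, fun y => ?_⟩
  · by_cases hmσ : m = σ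
    · subst hmσ
      simpa using (hψ m hm).mul hg
    · simpa [hmσ] using hψ m hm
  · rw [prod_mul_distrib, prod_ite_eq' s σ, if_pos hσ, ← hf]

lemma exists_mul_of_insert {l : ι} (hl : l ∉ s) (hf : FactorsOver C (insert l s) f) :
    ∃ F g : (∀ v, I v) → ℝ, FactorsOver C s F ∧ IsLocal (C l) g ∧ ∀ y, f y = F y * g y := by
  obtain ⟨ψ, hψ, hf⟩ := hf
  refine ⟨fun y => ∏ m ∈ s, ψ m y, ψ l, ⟨ψ, fun m hm => hψ m (mem_insert_of_mem hm),
    fun _ => rfl⟩, hψ l (mem_insert_self l s), fun y => ?_⟩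
  rw [hf, prod_insert hl, mul_comm]

/-- Summing out `C l` leaves a factor that depends only on the separator, which lies in `C σ`. -/
lemma pA_biUnion [Fintype V] [∀ v, Fintype (I v)] [DecidableEq V] {l σ : ι} (hl : l ∉ s)
    (hσ : σ ∈ s) (hsep : C l ∩ s.biUnion C ⊆ C σ) {B : Finset V} (hB : s.biUnion C ⊆ B)
    {p : (∀ v, I v) → ℝ} (hf : FactorsOver C (insert l s) (pA p B)) :
    FactorsOver C s (pA p (s.biUnion C)) := by
  obtain ⟨F, g, hF, hg, hfg⟩ := hf.exists_mul_of_insert hl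
  have hmarg : ∀ y, pA p (s.biUnion C) y =
      F y * (pA g (s.biUnion C) y / (cylinder B y).card) := by
    intro y
    have h := pA_pA_of_subset p hB y
    rw [show pA p B = fun y => F y * g y from funext hfg, pA_mul_of_isLocal hF.isLocal] at h
    field_simp [(card_cylinder_pos B y).ne']
    linarith
  have hloc : IsLocal (C σ) fun y => pA g (s.biUnion C) y / (cylinder B y).card :=
    ((hg.pA_inter _).mono (inter_comm (s.biUnion C) (C l) ▸ hsep)).div
      (isLocal_card_cylinder _ _)
  rw [show pA p (s.biUnion C) = _ from funext hmarg]
  exact hF.mul_isLocal hσ hloc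

end FactorsOver

end Factorization

section Decomposable

def finPrefix (k t : ℕ) : Finset (Fin k) := univ.filter fun m => m.val < t

lemma mem_finPrefix {k t : ℕ} {m : Fin k} : m ∈ finPrefix k t ↔ m.val < t := by
  simp [finPrefix]

lemma finPrefix_succ {k t : ℕ} (ht : t < k) :
    finPrefix k (t + 1) = insert ⟨t, ht⟩ (finPrefix k t) := by
  ext m
  simp only [mem_finPrefix, mem_insert, Fin.ext_iff]
  omega

lemma finPrefix_self (k : ℕ) : finPrefix k k = univ := by
  ext m
  simp [mem_finPrefix]

lemma finPrefix_one {k : ℕ} (hk : 0 < k) : finPrefix k 1 = {⟨0, hk⟩} := by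
  ext m
  simp only [mem_finPrefix, mem_singleton, Fin.ext_iff]
  omega

lemma filter_lt_eq_finPrefix {k : ℕ} (l : Fin k) :
    univ.filter (fun m => m < l) = finPrefix k l := by
  ext m
  simp [mem_finPrefix]

variable {V : Type*} [Fintype V] [DecidableEq V] {I : V → Type*} [∀ v, Fintype (I v)]
  {k : ℕ} {C : Fin k → Finset V}

def RunningIntersection (C : Fin k → Finset V) : Prop :=
  ∀ l : Fin k, 0 < l.val → ∃ m ∈ finPrefix k l, C l ∩ (finPrefix k l).biUnion C ⊆ C m

lemma factorsOver_pA_finPrefix (hcover : univ.biUnion C = univ) (hrip : RunningIntersection C)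
    {p : (∀ v, I v) → ℝ} (hp : FactorsOver C univ p) {t : ℕ} (ht : 0 < t) (htk : t ≤ k) :
    FactorsOver C (finPrefix k t) (pA p ((finPrefix k t).biUnion C)) := by
  induction htk using Nat.decreasingInduction with
  | self => simpa only [finPrefix_self, hcover, pA_univ] using hp
  | of_succ t htk ih =>
    obtain ⟨σ, hσ, hsep⟩ := hrip ⟨t, htk⟩ ht
    rw [finPrefix_succ htk] at ih
    exact (ih (Nat.succ_pos t)).pA_biUnion (by simp [mem_finPrefix]) hσ hsep
      (biUnion_subset_biUnion_of_subset_left C (subset_insert _ _))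

lemma pA_finPrefix_mul_prod_eq (hcover : univ.biUnion C = univ) (hrip : RunningIntersection C)
    {p : (∀ v, I v) → ℝ} (hp : FactorsOver C univ p) {t : ℕ} (ht : 0 < t) (htk : t ≤ k)
    (i : ∀ v, I v) :
    pA p ((finPrefix k t).biUnion C) i *
        ∏ m ∈ (finPrefix k t).filter (fun m => 0 < m.val),
          pA p (C m ∩ (finPrefix k m).biUnion C) i =
      ∏ m ∈ finPrefix k t, pA p (C m) i := by
  induction t, ht using Nat.le_induction with
  | base =>
    have hfilter : (finPrefix k 1).filter (fun m => 0 < m.val) = ∅ := by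
      ext m; simp [mem_finPrefix]
    rw [hfilter, finPrefix_one htk]
    simp
  | succ t ht ih =>
    set l : Fin k := ⟨t, htk⟩
    have hl : l ∉ finPrefix k t := by simp [l, mem_finPrefix]
    have hfactor := factorsOver_pA_finPrefix hcover hrip hp (Nat.succ_pos t) htk
    rw [finPrefix_succ htk] at hfactor ⊢
    obtain ⟨F, g, hF, hg, hfg⟩ := hfactor.exists_mul_of_insert hl
    have hCI := pA_mul_pA_eq_of_isLocal p hF.isLocal hg
      (fun y => by rw [union_comm, ← biUnion_insert, hfg]) i
    rw [filter_insert, if_pos (show 0 < l.val from ht), prod_insert hl,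
      prod_insert fun h => hl (mem_filter.1 h).1, biUnion_insert, ← ih (Nat.le_of_succ_le htk)]
    rw [union_comm, inter_comm] at hCI
    linear_combination (-∏ m ∈ (finPrefix k t).filter (fun m => 0 < m.val),
      pA p (C m ∩ (finPrefix k m).biUnion C) i) * hCI

theorem mul_prod_pA_sep_eq_prod_pA_clique (hcover : univ.biUnion C = univ)
    (hrip : RunningIntersection C) {p : (∀ v, I v) → ℝ} (hp : FactorsOver C univ p)
    (i : ∀ v, I v) :
    p i * ∏ l ∈ univ.filter (fun l : Fin k => 0 < l.val),
        pA p (C l ∩ (finPrefix k l).biUnion C) i =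
      ∏ l, pA p (C l) i := by
  rcases Nat.eq_zero_or_pos k with rfl | hk
  · obtain ⟨ψ, -, hψ⟩ := hp
    simp [hψ i]
  · simpa only [finPrefix_self, hcover, pA_univ] using
      pA_finPrefix_mul_prod_eq hcover hrip hp hk le_rfl i

end Decomposable

lemma neg_one_pow_sub_add_neg_one_pow_sub_succ {a b : ℕ} (h : b < a) :
    (-1 : ℝ) ^ (a - b) + (-1) ^ (a - (b + 1)) = 0 := by
  rw [show a - b = a - (b + 1) + 1 by omega, pow_succ]
  ring

section Toggle

variable {V : Type*} [DecidableEq V] {I : V → Type*} [∀ v, DecidableEq (I v)]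
  {z j : ∀ v, I v}

variable (z j) in
def toggle (v : V) (j' : ∀ v, I v) : ∀ v, I v :=
  Function.update j' v (if j' v = z v then j v else z v)

lemma toggle_ne {v : V} (hvj : j v ≠ z v) (j' : ∀ v, I v) : toggle z j v j' ≠ j' := by
  intro h
  have := congrFun h v
  by_cases hc : j' v = z v <;> simp_all [toggle]

lemma tri_toggle {j' : ∀ v, I v} (h : tri z j' j) (v : V) : tri z (toggle z j v j') j := by
  intro u hu
  by_cases huv : u = v
  · subst huv
    by_cases hc : j' u = z u <;> simp_all [toggle]
  · simp only [toggle, Function.update_of_ne huv] at hu ⊢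
    exact h u hu

lemma toggle_toggle {j' : ∀ v, I v} (h : tri z j' j) {v : V} (hvj : j v ≠ z v) :
    toggle z j v (toggle z j v j') = j' := by
  ext u
  by_cases huv : u = v
  · subst huv
    by_cases hc : j' u = z u
    · simp [toggle, hc, hvj]
    · simp [toggle, h u hc]
  · simp [toggle, Function.update_of_ne huv]

end Toggle

section LogLinear

variable {V : Type*} [Fintype V] {I : V → Type*} {z j : ∀ v, I v}

lemma mem_supp {v : V} : v ∈ supp z j ↔ j v ≠ z v := by
  simp [supp]

lemma supp_subset_of_tri {j' : ∀ v, I v} (h : tri z j' j) : supp z j' ⊆ supp z j :=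
  fun v hv => mem_supp.2 (h v (mem_supp.1 hv) ▸ mem_supp.1 hv)

variable [DecidableEq V]

lemma supp_update_of_ne {v : V} {w : I v} (hw : w ≠ z v) :
    supp z (Function.update j v w) = insert v (supp z j) := by
  ext u
  by_cases h : u = v
  · subst h; simp [mem_supp, hw]
  · simp [mem_supp, h]

lemma supp_update_self {v : V} : supp z (Function.update j v (z v)) = (supp z j).erase v := by
  ext u
  by_cases h : u = v
  · subst h; simp [mem_supp]
  · simp [mem_supp, h]

variable [∀ v, DecidableEq (I v)]

lemma neg_one_pow_add_neg_one_pow_toggle {j' : ∀ v, I v} (h : tri z j' j) {v : V}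
    (hvj : j v ≠ z v) :
    (-1 : ℝ) ^ ((supp z j).card - (supp z j').card) +
      (-1) ^ ((supp z j).card - (supp z (toggle z j v j')).card) = 0 := by
  have hsub := supp_subset_of_tri h
  by_cases hc : j' v = z v
  · have hv : v ∉ supp z j' := by simpa [mem_supp] using hc
    have hle := card_le_card (insert_subset (mem_supp.2 hvj) hsub)
    rw [card_insert_of_notMem hv] at hle
    rw [show toggle z j v j' = Function.update j' v (j v) by simp [toggle, hc],
      supp_update_of_ne hvj, card_insert_of_notMem hv]
    exact neg_one_pow_sub_add_neg_one_pow_sub_succ hle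
  · have hv : v ∈ supp z j' := mem_supp.2 hc
    have h1 := card_pos.2 ⟨v, hv⟩
    have h2 := card_le_card hsub
    have := neg_one_pow_sub_add_neg_one_pow_sub_succ (a := (supp z j).card)
      (b := (supp z j').card - 1) (by omega)
    rw [show toggle z j v j' = Function.update j' v (z v) by simp [toggle, hc], supp_update_self,
      card_erase_of_mem hv, add_comm]
    rwa [Nat.sub_add_cancel h1] at this

variable [∀ v, Fintype (I v)]

/-- The Möbius sum defining `θ^A_j` cancels in pairs, toggling a coordinate of `S(j)` outside
`A` between `j` and `z`: this leaves the `A`-marginal unchanged and flips the sign. -/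
lemma θA_eq_zero_of_not_subset (p : (∀ v, I v) → ℝ) {A : Finset V} (hA : ¬ supp z j ⊆ A) :
    θA z p A j = 0 := by
  obtain ⟨v, hvj, hvA⟩ := not_subset.1 hA
  have hvj' : j v ≠ z v := mem_supp.1 hvj
  have hmem : ∀ {j'}, j' ∈ univ.filter (fun j' => tri z j' j) ↔ tri z j' j := by simp
  refine sum_involution (fun j' _ => toggle z j v j') (fun j' hj' => ?_)
    (fun j' _ _ => toggle_ne hvj' j') (fun j' hj' => hmem.2 (tri_toggle (hmem.1 hj') v))
    (fun j' hj' => toggle_toggle (hmem.1 hj') hvj')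
  have hmarg : pA p A (toggle z j v j') = pA p A j' :=
    isLocal_pA p A fun u hu => Function.update_of_ne (ne_of_mem_of_not_mem hu hvA) _ _
  rw [hmarg, ← add_mul, neg_one_pow_add_neg_one_pow_toggle (hmem.1 hj') hvj', zero_mul]

lemma sum_filter_supp_subset_θA {ι : Type*} (p : (∀ v, I v) → ℝ) (s : Finset ι)
    (A : ι → Finset V) [DecidablePred fun l => supp z j ⊆ A l] :
    ∑ l ∈ s.filter (fun l => supp z j ⊆ A l), θA z p (A l) j = ∑ l ∈ s, θA z p (A l) j :=
  sum_filter_of_ne fun _ _ h => by_contra (h ∘ θA_eq_zero_of_not_subset p)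

lemma θA_eq_sum_sub_sum {ι : Type*} (p : (∀ v, I v) → ℝ) (D : Finset V) (s t : Finset ι)
    (A B : ι → Finset V)
    (h : ∀ y, Real.log (pA p D y / pA p D z) =
      ∑ l ∈ s, Real.log (pA p (A l) y / pA p (A l) z) -
        ∑ l ∈ t, Real.log (pA p (B l) y / pA p (B l) z)) :
    θA z p D j = ∑ l ∈ s, θA z p (A l) j - ∑ l ∈ t, θA z p (B l) j := by
  simp only [θA, h, mul_sub, mul_sum, sum_sub_distrib]
  congr 1 <;> exact sum_comm

end LogLinear

lemma Real.log_div_eq_sum_sub_sum {α ι : Type*} {f : α → ℝ} {a b : ι → α → ℝ}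
    {s t : Finset ι} (ha : ∀ l y, 0 < a l y) (hb : ∀ l y, 0 < b l y)
    (hf : ∀ y, f y = (∏ l ∈ s, a l y) / ∏ l ∈ t, b l y) (y z : α) :
    Real.log (f y / f z) =
      ∑ l ∈ s, Real.log (a l y / a l z) - ∑ l ∈ t, Real.log (b l y / b l z) := by
  have hpos : ∀ y, 0 < f y := fun y => hf y ▸ div_pos (prod_pos fun l _ => ha l y)
    (prod_pos fun l _ => hb l y)
  have hlog : ∀ y, Real.log (f y) = ∑ l ∈ s, Real.log (a l y) - ∑ l ∈ t, Real.log (b l y) :=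
    fun y => by
      rw [hf, Real.log_div (prod_pos fun l _ => ha l y).ne' (prod_pos fun l _ => hb l y).ne',
        Real.log_prod fun l _ => (ha l y).ne', Real.log_prod fun l _ => (hb l y).ne']
  simp only [Real.log_div (hpos y).ne' (hpos z).ne', hlog,
    Real.log_div (ha _ y).ne' (ha _ z).ne', Real.log_div (hb _ y).ne' (hb _ z).ne',
    sum_sub_distrib]
  ring

theorem stmt17_general {V : Type*} [Fintype V] [DecidableEq V]
    {I : V → Type*} [∀ v, Fintype (I v)] [∀ v, DecidableEq (I v)]
    (z : ∀ v, I v)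
    (k : ℕ)
    (C : Fin k → Finset V) (Sep : Fin k → Finset V)
    (hcover : Finset.univ.biUnion C = Finset.univ)
    -- perfect ordering: running intersection property
    (hSep : ∀ l : Fin k, 0 < l.val →
      Sep l = C l ∩ (Finset.univ.filter (fun m : Fin k => m < l)).biUnion C ∧
        ∃ m : Fin k, m < l ∧ Sep l ⊆ C m)
    -- a strictly positive probability, Markov w.r.t. G (factorization over the cliques)
    (p : (∀ v, I v) → ℝ) (hp : ∀ i, 0 < p i)
    (hMarkov : ∃ φ : Fin k → (∀ v, I v) → ℝ,
      (∀ l, ∀ i i' : ∀ v, I v, (∀ v ∈ C l, i v = i' v) → φ l i = φ l i') ∧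
        ∀ i, p i = ∏ l, φ l i) :
    (∀ i, p i = (∏ l, pA p (C l) i) /
        ∏ l ∈ Finset.univ.filter (fun l : Fin k => 0 < l.val), pA p (Sep l) i) ∧
    (∀ j : ∀ v, I v,
      θA z p Finset.univ j =
        (∑ l ∈ Finset.univ.filter (fun l : Fin k => supp z j ⊆ C l), θA z p (C l) j) -
          ∑ l ∈ Finset.univ.filter (fun l : Fin k => 0 < l.val ∧ supp z j ⊆ Sep l),
            θA z p (Sep l) j) := by
  obtain ⟨φ, hφloc, hφ⟩ := hMarkov
  have hSep' : ∀ l ∈ univ.filter (fun l : Fin k => 0 < l.val),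
      Sep l = C l ∩ (finPrefix k l).biUnion C := fun l hl => by
    rw [(hSep l (mem_filter.1 hl).2).1, filter_lt_eq_finPrefix]
  have hrip : RunningIntersection C := fun l hl => by
    obtain ⟨m, hml, hm⟩ := (hSep l hl).2
    rw [← hSep' l (mem_filter.2 ⟨mem_univ l, hl⟩)]
    exact ⟨m, mem_finPrefix.2 hml, hm⟩
  have hfactor : ∀ i, p i = (∏ l, pA p (C l) i) /
      ∏ l ∈ univ.filter (fun l : Fin k => 0 < l.val), pA p (Sep l) i := fun i => by
    rw [eq_div_iff (prod_pos fun l _ => pA_pos hp _ _).ne', prod_congr rfl fun l hl => by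
      rw [hSep' l hl]]
    exact mul_prod_pA_sep_eq_prod_pA_clique hcover hrip ⟨φ, fun l _ => hφloc l, hφ⟩ i
  refine ⟨hfactor, fun j => ?_⟩
  rw [← filter_filter, sum_filter_supp_subset_θA, sum_filter_supp_subset_θA]
  refine θA_eq_sum_sub_sum p univ _ _ C Sep fun y => ?_
  rw [pA_univ]
  exact Real.log_div_eq_sum_sub_sum (fun l => pA_pos hp (C l)) (fun l => pA_pos hp (Sep l))
    hfactor y z

/-- Decomposable model parameter formula: for a strictly positive distribution Markov
with respect to a decomposable graph `G` with a perfect ordering of cliques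
`C 0, …, C (k-1)` and separators `Sep l = C l ∩ (C 0 ∪ ⋯ ∪ C (l-1))`, the joint
probabilities factor as `p(i) = ∏_l p^{C l}(i_{C l}) / ∏_{l ≥ 1} p^{Sep l}(i_{Sep l})`,
and each loglinear parameter satisfies
`θ_j = ∑_{l : S(j) ⊆ C l} θ^{C l}_j − ∑_{l ≥ 1 : S(j) ⊆ Sep l} θ^{Sep l}_j`. -/
theorem stmt17 {V : Type*} [Fintype V] [DecidableEq V]
    {I : V → Type*} [∀ v, Fintype (I v)] [∀ v, DecidableEq (I v)]
    (z : ∀ v, I v)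
    (G : SimpleGraph V) (k : ℕ)
    (C : Fin k → Finset V) (Sep : Fin k → Finset V)
    (hclique : ∀ l, G.IsClique (↑(C l) : Set V))
    (hcover : Finset.univ.biUnion C = Finset.univ)
    -- perfect ordering: running intersection property
    (hSep : ∀ l : Fin k, 0 < l.val →
      Sep l = C l ∩ (Finset.univ.filter (fun m : Fin k => m < l)).biUnion C ∧
        ∃ m : Fin k, m < l ∧ Sep l ⊆ C m)
    -- a strictly positive probability, Markov w.r.t. G (factorization over the cliques)
    (p : (∀ v, I v) → ℝ) (hp : ∀ i, 0 < p i) (hsum : ∑ i : ∀ v, I v, p i = 1)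
    (hMarkov : ∃ φ : Fin k → (∀ v, I v) → ℝ,
      (∀ l, ∀ i i' : ∀ v, I v, (∀ v ∈ C l, i v = i' v) → φ l i = φ l i') ∧
        ∀ i, p i = ∏ l, φ l i) :
    (∀ i, p i = (∏ l, pA p (C l) i) /
        ∏ l ∈ Finset.univ.filter (fun l : Fin k => 0 < l.val), pA p (Sep l) i) ∧
    (∀ j : ∀ v, I v,
      θA z p Finset.univ j =
        (∑ l ∈ Finset.univ.filter (fun l : Fin k => supp z j ⊆ C l), θA z p (C l) j) -
          ∑ l ∈ Finset.univ.filter (fun l : Fin k => 0 < l.val ∧ supp z j ⊆ Sep l),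
            θA z p (Sep l) j) :=
  stmt17_general z k C Sep hcover hSep p hp hMarkov
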